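/- arXiv:1505.00150 — 2 statements merged into one kernel-verified Lean document; each statement's English description precedes it below -/
import Mathlib

section
/- Let T>0, E a Banach space, V a Banach space densely and continuously embedded in E, and {A(t)}_{t∈[0,T]} a family of linear operators on E satisfying (Hyp'1) with constant ω>0, (Hyp3) and (Hyp4). Then the operator A_0 := (1/T)∫_0^T A(τ)dτ ∈ L(V,E), viewed as a densely defined operator in E with domain V, is closable, and its closure Â generates a C0 semigroup S_Â on E with ‖S_Â(t)‖ ≤ e^{−ωt} for all t≥0. -/
/-!
The shifted operator `A₀ + ω` is dissipative. For `x = ι v` and a norming functional `φ` of `x`,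
differentiating `φ (S_{A(τ)}(s) x) ≤ e^{-ω s} ‖x‖` at `s = 0` gives `φ (A(τ) v) ≤ -ω ‖x‖`, and
averaging over `τ ∈ [0, T]` gives `φ (A₀ v + ω x) ≤ 0`. By (Hyp4) the range of
`μ₀ + ω - (A₀ + ω)` is dense, so the Lumer–Phillips theorem applies to `A₀ + ω`: a densely defined
dissipative operator is closable, the range condition passes to its closure and, by a Neumann
series, to every `λ > 0`, and the strong limit of `e^{t Aₙ}` for the Yosida approximations
`Aₙ = n² (n - A)⁻¹ - n` is a contraction semigroup generated by the closure. Multiplying it by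
`e^{-ω t}` gives the semigroup generated by `Â`.
-/

open Filter Topology Set MeasureTheory

noncomputable section

variable {E : Type*} [NormedAddCommGroup E] [NormedSpace ℝ E]

/-- A C₀ semigroup of bounded linear operators on `E`. -/
structure IsC0Semigroup (S : ℝ → E →L[ℝ] E) : Prop where
  map_zero : S 0 = 1
  map_add : ∀ ⦃t s : ℝ⦄, 0 ≤ t → 0 ≤ s → S (t + s) = (S t).comp (S s)
  strong_cont : ∀ x : E, ContinuousOn (fun t => S t x) (Ici (0 : ℝ))

/-- `y` is the limit of `t⁻¹ • (S t x - x)` as `t → 0⁺`. -/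
def GenLimitAt (S : ℝ → E →L[ℝ] E) (x y : E) : Prop :=
  Tendsto (fun t : ℝ => t⁻¹ • (S t x - x)) (𝓝[>] (0 : ℝ)) (𝓝 y)

/-- The (unbounded) operator with domain `D` and action `A` is the generator of `S`. -/
def IsGeneratorOf (D : Set E) (A : E → E) (S : ℝ → E →L[ℝ] E) : Prop :=
  (∀ x, x ∈ D ↔ ∃ y, GenLimitAt S x y) ∧ ∀ x ∈ D, GenLimitAt S x (A x)

/-- Graph of an operator with domain `D` and action `A`. -/
def opGraph (D : Set E) (A : E → E) : Set (E × E) := {p | p.1 ∈ D ∧ p.2 = A p.1}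

/-- The operator `(D, A)` is closable: the closure of its graph is a graph of a function. -/
def IsClosableOp (D : Set E) (A : E → E) : Prop :=
  ∀ x y₁ y₂, (x, y₁) ∈ closure (opGraph D A) → (x, y₂) ∈ closure (opGraph D A) → y₁ = y₂

/-- `(D', A')` is the closure of the operator `(D, A)`. -/
def IsClosureOf (D' : Set E) (A' : E → E) (D : Set E) (A : E → E) : Prop :=
  (∀ x, x ∈ D' ↔ ∃ y, (x, y) ∈ closure (opGraph D A)) ∧
  ∀ x ∈ D', (x, A' x) ∈ closure (opGraph D A)

/-- `(D, A)` is a linear operator (its domain is a subspace on which it acts linearly). -/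
def IsLinearOp (D : Set E) (A : E → E) : Prop :=
  (0 : E) ∈ D ∧
  (∀ x ∈ D, ∀ y ∈ D, x + y ∈ D ∧ A (x + y) = A x + A y) ∧
  (∀ (c : ℝ), ∀ x ∈ D, c • x ∈ D ∧ A (c • x) = c • A x)

/-- An evolution system `{R(t,s)}_{0 ≤ s ≤ t ≤ T}` on `E`. -/
structure IsEvolutionSystem (T : ℝ) (R : ℝ → ℝ → E →L[ℝ] E) : Prop where
  refl : ∀ t ∈ Icc (0 : ℝ) T, R t t = 1
  comp : ∀ ⦃s r t : ℝ⦄, 0 ≤ s → s ≤ r → r ≤ t → t ≤ T → R t s = (R t r).comp (R r s)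
  strong_cont : ∀ x : E, ContinuousOn (fun p : ℝ × ℝ => R p.1 p.2 x)
    {p : ℝ × ℝ | 0 ≤ p.2 ∧ p.2 ≤ p.1 ∧ p.1 ≤ T}

/-- The parameter domain `{(t,s) : 0 ≤ s ≤ t ≤ T}` of an evolution system. -/
def evolDomain (T : ℝ) : Set (ℝ × ℝ) := {p : ℝ × ℝ | 0 ≤ p.2 ∧ p.2 ≤ p.1 ∧ p.1 ≤ T}

/-- A family `{R^{(λ)}}_{λ∈[0,1]}` of evolution systems is continuous: for every `x ∈ E`
and every sequence `λₙ → λ₀` in `[0,1]`, `R^{(λₙ)}(t,s)x → R^{(λ₀)}(t,s)x` uniformly in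
`0 ≤ s ≤ t ≤ T`. -/
def IsContinuousEvolFamily (T : ℝ) (R : ℝ → ℝ → ℝ → E →L[ℝ] E) : Prop :=
  ∀ (x : E) (l : ℕ → ℝ) (l0 : ℝ), (∀ n, l n ∈ Icc (0 : ℝ) 1) → l0 ∈ Icc (0 : ℝ) 1 →
    Tendsto l atTop (𝓝 l0) →
    TendstoUniformlyOn (fun n p => R (l n) p.1 p.2 x) (fun p => R l0 p.1 p.2 x)
      atTop (evolDomain T)

/-- The map `Σ(x,w,λ)(t) = R^{(λ)}(t,0)x + ∫₀ᵗ R^{(λ)}(t,s) w(s) ds`. -/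
def evolMap (R : ℝ → ℝ → E →L[ℝ] E) (x : E) (w : ℝ → E) (t : ℝ) : E :=
  R t 0 x + ∫ s in (0 : ℝ)..t, R t s (w s)

/-- The Hausdorff measure of noncompactness of a set `Q`. -/
def hausdorffMNC (Q : Set E) : ℝ :=
  sInf {r : ℝ | 0 < r ∧ ∃ c : Finset E, Q ⊆ ⋃ y ∈ c, Metric.ball y r}

variable {V : Type*} [NormedAddCommGroup V] [NormedSpace ℝ V]

/-- The data of a time-dependent family `{A(t)}` of (unbounded) linear operators on `E`:
domains `dom t`, actions `op t`, the C₀ semigroups `sg t = S_{A(t)}`, and the bounded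
operators `bdd t ∈ L(V,E)` obtained by restricting `A(t)` to `V` (via the embedding `ι`). -/
structure HypData (E V : Type*) [NormedAddCommGroup E] [NormedSpace ℝ E]
    [NormedAddCommGroup V] [NormedSpace ℝ V] where
  dom : ℝ → Set E
  op : ℝ → E → E
  sg : ℝ → ℝ → E →L[ℝ] E
  bdd : ℝ → V →L[ℝ] E

/-- Each `A(t)`, `t ∈ [0,T]`, generates the C₀ semigroup `sg t`. -/
def HypGen (T : ℝ) (A : HypData E V) : Prop :=
  ∀ t ∈ Icc (0 : ℝ) T, IsC0Semigroup (A.sg t) ∧ IsGeneratorOf (A.dom t) (A.op t) (A.sg t)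

/-- Stability of a family of semigroups: for `0 ≤ t₁ ≤ ⋯ ≤ tₙ ≤ T`, `sᵢ ≥ 0`,
`‖S(t₁)(s₁)⋯S(tₙ)(sₙ)‖ ≤ M e^{ω(s₁+⋯+sₙ)}`. -/
def StableFamily {F : Type*} [NormedRing F] (T : ℝ) (S : ℝ → ℝ → F) (M ω : ℝ) : Prop :=
  ∀ (n : ℕ) (ts ss : Fin n → ℝ), Monotone ts → (∀ i, ts i ∈ Icc (0 : ℝ) T) →
    (∀ i, 0 ≤ ss i) →
    ‖(List.ofFn fun i => S (ts i) (ss i)).prod‖ ≤ M * Real.exp (ω * ∑ i, ss i)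

/-- Condition (Hyp'1): stability with `M = 1` and exponent `−ω`, `ω > 0`. -/
def Hyp1' (T : ℝ) (A : HypData E V) (ω : ℝ) : Prop :=
  0 < ω ∧ StableFamily T A.sg 1 (-ω)

/-- Condition (Hyp1): stability with constants `M ≥ 1`, `ω ∈ ℝ`. -/
def Hyp1 (T : ℝ) (A : HypData E V) (M ω : ℝ) : Prop :=
  1 ≤ M ∧ StableFamily T A.sg M ω

variable (ι : V →L[ℝ] E)

/-- Condition (Hyp2): `V` is `A(t)`-admissible for each `t` and the family of parts of the
`A(t)` in `V` is stable with constants `M_V`, `ω_V`. -/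
def Hyp2 (T : ℝ) (A : HypData E V) (MV ωV : ℝ) : Prop :=
  ∃ SV : ℝ → ℝ → V →L[ℝ] V,
    (∀ t ∈ Icc (0 : ℝ) T, IsC0Semigroup (SV t)) ∧
    (∀ t ∈ Icc (0 : ℝ) T, ∀ s ≥ (0 : ℝ), ∀ v : V, ι (SV t s v) = A.sg t s (ι v)) ∧
    1 ≤ MV ∧ StableFamily T SV MV ωV

/-- Condition (Hyp3): `V ⊆ D(A(t))`, `A(t)|_V = bdd t ∈ L(V,E)`, and `t ↦ bdd t` is
norm-continuous on `[0,T]`. -/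
def Hyp3 (T : ℝ) (A : HypData E V) : Prop :=
  (∀ t ∈ Icc (0 : ℝ) T, ∀ v : V, ι v ∈ A.dom t ∧ A.op t (ι v) = A.bdd t v) ∧
  ContinuousOn A.bdd (Icc (0 : ℝ) T)

/-- The time average `A₀ = (1/T)∫₀ᵀ A(τ) dτ ∈ L(V,E)`. -/
def timeAvg (T : ℝ) (A : HypData E V) : V →L[ℝ] E :=
  (1 / T) • ∫ τ in (0 : ℝ)..T, A.bdd τ

/-- Condition (Hyp4): there is `μ₀ > −ω` such that `(μ₀ I − A₀)V` is dense in `E`. -/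
def Hyp4 (T : ℝ) (A : HypData E V) (ω : ℝ) : Prop :=
  ∃ μ0 : ℝ, -ω < μ0 ∧ Dense (Set.range fun v : V => μ0 • ι v - timeAvg T A v)

/-- Condition (Hyp5): `A(0) = A(T)` (equal domains and actions). -/
def Hyp5 (T : ℝ) (A : HypData E V) : Prop :=
  A.dom 0 = A.dom T ∧ ∀ x ∈ A.dom 0, A.op 0 x = A.op T x

/-- `R` is the evolution system determined by the family with restrictions `Abdd t ∈ L(V,E)`:
it is an evolution system satisfying the norm bound `‖R(t,s)‖ ≤ M e^{ω(t−s)}`, with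
`(∂⁺/∂t)R(t,s)v|_{t=s} = A(s)v` and `(∂/∂s)R(t,s)v = −R(t,s)A(s)v` for `v ∈ V`. -/
def IsDeterminedEvolSystem (T : ℝ) (Abdd : ℝ → V →L[ℝ] E) (M ω : ℝ)
    (R : ℝ → ℝ → E →L[ℝ] E) : Prop :=
  IsEvolutionSystem T R ∧
  (∀ s t : ℝ, 0 ≤ s → s ≤ t → t ≤ T → ‖R t s‖ ≤ M * Real.exp (ω * (t - s))) ∧
  (∀ v : V, ∀ s ∈ Ico (0 : ℝ) T,
    HasDerivWithinAt (fun t => R t s (ι v)) (Abdd s v) (Ici s) s) ∧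
  (∀ v : V, ∀ s t : ℝ, 0 ≤ s → s ≤ t → t ≤ T →
    HasDerivWithinAt (fun r => R t r (ι v)) (-(R t s (Abdd s v))) (Icc (0 : ℝ) t) s)

section Closure

variable {F : Type*} [NormedAddCommGroup F] {D : Set F} {g : F → F}

def closureDom (D : Set F) (g : F → F) : Set F := {x | ∃ y, (x, y) ∈ closure (opGraph D g)}

open Classical in
def closureOp (D : Set F) (g : F → F) (x : F) : F :=
  if h : ∃ y, (x, y) ∈ closure (opGraph D g) then h.choose else 0

theorem closureOp_mem_closure {x : F} (hx : x ∈ closureDom D g) :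
    (x, closureOp D g x) ∈ closure (opGraph D g) := by
  have hx' : ∃ y, (x, y) ∈ closure (opGraph D g) := hx
  rw [closureOp, dif_pos hx']
  exact hx'.choose_spec

theorem isClosureOf_closure : IsClosureOf (closureDom D g) (closureOp D g) D g :=
  ⟨fun _ => Iff.rfl, fun _ => closureOp_mem_closure⟩

theorem IsClosableOp.mem_closure_opGraph_iff (h : IsClosableOp D g) {x y : F} :
    (x, y) ∈ closure (opGraph D g) ↔ x ∈ closureDom D g ∧ y = closureOp D g x :=
  ⟨fun hxy => ⟨⟨y, hxy⟩, h x y _ hxy (closureOp_mem_closure ⟨y, hxy⟩)⟩,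
    fun ⟨hx, e⟩ => e ▸ closureOp_mem_closure hx⟩

end Closure

section Dissipative

variable {D : Set E} {g : E → E}

theorem IsLinearOp.map_zero (h : IsLinearOp D g) : g 0 = 0 := by
  simpa using (h.2.2 0 0 h.1).2

theorem IsLinearOp.sub (h : IsLinearOp D g) {x y : E} (hx : x ∈ D) (hy : y ∈ D) :
    x - y ∈ D ∧ g (x - y) = g x - g y := by
  have hneg := h.2.2 (-1) y hy
  simp only [neg_one_smul] at hneg
  have hsum := h.2.1 x hx _ hneg.1
  rw [← sub_eq_add_neg] at hsum
  exact ⟨hsum.1, by rw [hsum.2, hneg.2, ← sub_eq_add_neg]⟩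

def IsLinearOp.graph (h : IsLinearOp D g) : Submodule ℝ (E × E) where
  carrier := opGraph D g
  zero_mem' := ⟨h.1, h.map_zero.symm⟩
  add_mem' := by
    rintro ⟨x₁, y₁⟩ ⟨x₂, y₂⟩ ⟨h₁, e₁ : y₁ = g x₁⟩ ⟨h₂, e₂ : y₂ = g x₂⟩
    exact ⟨(h.2.1 x₁ h₁ x₂ h₂).1, by simp [e₁, e₂, (h.2.1 x₁ h₁ x₂ h₂).2]⟩
  smul_mem' := by
    rintro c ⟨x, y⟩ ⟨hx, e : y = g x⟩
    exact ⟨(h.2.2 c x hx).1, by simp [e, (h.2.2 c x hx).2]⟩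

theorem IsLinearOp.mem_closure_graph_iff (h : IsLinearOp D g) {p : E × E} :
    p ∈ closure (opGraph D g) ↔ p ∈ h.graph.topologicalClosure :=
  Iff.rfl

def IsDissipative (D : Set E) (g : E → E) : Prop :=
  ∀ x ∈ D, ∀ l : ℝ, 0 < l → l * ‖x‖ ≤ ‖l • x - g x‖

theorem IsDissipative.of_dual
    (h : ∀ x ∈ D, ∀ φ : StrongDual ℝ E, ‖φ‖ ≤ 1 → φ x = ‖x‖ → φ (g x) ≤ 0) :
    IsDissipative D g := by
  intro x hx l hl
  obtain ⟨φ, hφ, hφx⟩ := exists_dual_vector'' ℝ x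
  replace hφx : φ x = ‖x‖ := by simpa using hφx
  calc l * ‖x‖ ≤ φ (l • x - g x) := by
        rw [map_sub, map_smul, hφx, smul_eq_mul]
        linarith [h x hx φ hφ hφx]
    _ ≤ ‖φ‖ * ‖l • x - g x‖ := (le_abs_self _).trans (φ.le_opNorm _)
    _ ≤ ‖l • x - g x‖ := mul_le_of_le_one_left (norm_nonneg _) hφ

theorem IsDissipative.closure_opGraph (h : IsDissipative D g) {p : E × E}
    (hp : p ∈ closure (opGraph D g)) {l : ℝ} (hl : 0 < l) : l * ‖p.1‖ ≤ ‖l • p.1 - p.2‖ := by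
  refine closure_minimal (t := {q : E × E | l * ‖q.1‖ ≤ ‖l • q.1 - q.2‖}) ?_ ?_ hp
  · rintro ⟨x, y⟩ ⟨hx, e : y = g x⟩
    subst e
    exact h x hx l hl
  · exact isClosed_le (by fun_prop) (by fun_prop)

theorem IsDissipative.eq_of_smul_sub_eq (h : IsDissipative D g) (hlin : IsLinearOp D g)
    {x y : E} (hx : x ∈ D) (hy : y ∈ D) {l : ℝ} (hl : 0 < l)
    (heq : l • x - g x = l • y - g y) : x = y := by
  obtain ⟨hxy, hgxy⟩ := hlin.sub hx hy
  have hle := h _ hxy l hl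
  rw [hgxy, show l • (x - y) - (g x - g y) = (l • x - g x) - (l • y - g y) by module, heq,
    sub_self, norm_zero] at hle
  exact sub_eq_zero.mp (norm_le_zero_iff.mp (nonpos_of_mul_nonpos_right hle hl))

/-- Dissipativity at `(0, y) + t (z, g z)` with `l = 1 / t` gives `‖z‖ ≤ ‖z - y - t g z‖`;
let `t → 0⁺`. -/
theorem IsDissipative.norm_le_norm_sub_of_mem_closure (h : IsDissipative D g)
    (hlin : IsLinearOp D g) {y : E} (hy : ((0 : E), y) ∈ closure (opGraph D g)) {z : E}
    (hz : z ∈ D) : ‖z‖ ≤ ‖z - y‖ := by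
  have hbound : ∀ t : ℝ, 0 < t → ‖z‖ ≤ ‖z - y - t • g z‖ := by
    intro t ht
    have hz' : (z, g z) ∈ hlin.graph.topologicalClosure := subset_closure ⟨hz, rfl⟩
    have hp : ((t • z, y + t • g z) : E × E) ∈ hlin.graph.topologicalClosure := by
      simpa using add_mem (hlin.mem_closure_graph_iff.1 hy) (Submodule.smul_mem _ t hz')
    have hd := h.closure_opGraph hp (inv_pos.mpr ht)
    rwa [smul_smul, inv_mul_cancel₀ ht.ne', one_smul, norm_smul, Real.norm_of_nonneg ht.le,
      inv_mul_cancel_left₀ ht.ne', ← sub_sub] at hd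
  have hlim : Tendsto (fun t : ℝ => ‖z - y - t • g z‖) (𝓝[>] 0) (𝓝 ‖z - y‖) := by
    simpa using ((by fun_prop : Continuous fun t : ℝ => ‖z - y - t • g z‖).tendsto 0).mono_left
      nhdsWithin_le_nhds
  exact ge_of_tendsto hlim (eventually_nhdsWithin_of_forall hbound)

theorem IsDissipative.eq_zero_of_mem_closure_opGraph (h : IsDissipative D g)
    (hlin : IsLinearOp D g) (hdense : Dense D) {y : E}
    (hy : ((0 : E), y) ∈ closure (opGraph D g)) : y = 0 := by
  have hall : closure D ⊆ {z | ‖z‖ ≤ ‖z - y‖} :=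
    closure_minimal (fun _ => h.norm_le_norm_sub_of_mem_closure hlin hy)
      (isClosed_le (by fun_prop) (by fun_prop))
  simpa using hall (hdense y)

theorem IsDissipative.isClosableOp (h : IsDissipative D g) (hlin : IsLinearOp D g)
    (hdense : Dense D) : IsClosableOp D g := fun x y₁ y₂ h₁ h₂ =>
  sub_eq_zero.mp <| h.eq_zero_of_mem_closure_opGraph hlin hdense <| by
    simpa using hlin.mem_closure_graph_iff.2
      (sub_mem (hlin.mem_closure_graph_iff.1 h₁) (hlin.mem_closure_graph_iff.1 h₂))

theorem IsClosableOp.isLinearOp_closure (h : IsClosableOp D g) (hlin : IsLinearOp D g) :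
    IsLinearOp (closureDom D g) (closureOp D g) := by
  have hmem : ∀ {p : E × E}, p ∈ hlin.graph.topologicalClosure →
      p.1 ∈ closureDom D g ∧ p.2 = closureOp D g p.1 := fun hp => h.mem_closure_opGraph_iff.1 hp
  have hgraph : ∀ {x}, x ∈ closureDom D g → (x, closureOp D g x) ∈ hlin.graph.topologicalClosure :=
    closureOp_mem_closure
  refine ⟨(hmem (zero_mem _)).1, fun x hx y hy => ?_, fun c x hx => ?_⟩
  · obtain ⟨h₁, h₂⟩ := hmem (add_mem (hgraph hx) (hgraph hy))
    exact ⟨h₁, h₂.symm⟩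
  · obtain ⟨h₁, h₂⟩ := hmem (Submodule.smul_mem _ c (hgraph hx))
    exact ⟨h₁, h₂.symm⟩

theorem IsDissipative.closure (h : IsDissipative D g) :
    IsDissipative (closureDom D g) (closureOp D g) := fun _ hx _ hl =>
  h.closure_opGraph (closureOp_mem_closure hx) hl

theorem IsDissipative.surjective_closure [CompleteSpace E] (h : IsDissipative D g)
    (hlin : IsLinearOp D g) (hcl : IsClosableOp D g) {l : ℝ} (hl : 0 < l) (hrange : Dense ((fun x => l • x - g x) '' D))
    (z : E) : ∃ x ∈ closureDom D g, l • x - closureOp D g x = z := by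
  obtain ⟨u, hu, hu_lim⟩ := mem_closure_iff_seq_limit.mp (hrange z)
  choose v hvD hvu using hu
  have hv_cauchy : CauchySeq v := by
    refine Metric.cauchySeq_iff.2 fun ε hε => ?_
    obtain ⟨N, hN⟩ := Metric.cauchySeq_iff.1 hu_lim.cauchySeq (l * ε) (by positivity)
    refine ⟨N, fun m hm n hn => ?_⟩
    obtain ⟨hsub, hgsub⟩ := hlin.sub (hvD m) (hvD n)
    have hle := h _ hsub l hl
    rw [hgsub, show l • (v m - v n) - (g (v m) - g (v n)) = u m - u n by
      rw [← hvu m, ← hvu n]; module, ← dist_eq_norm, ← dist_eq_norm] at hle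
    exact lt_of_mul_lt_mul_left (hle.trans_lt (hN m hm n hn)) hl.le
  obtain ⟨x, hx⟩ := cauchySeq_tendsto_of_complete hv_cauchy
  have hgv : Tendsto (fun n => g (v n)) atTop (𝓝 (l • x - z)) := by
    have : (fun n => g (v n)) = fun n => l • v n - u n := funext fun n => by
      rw [← hvu n, sub_sub_cancel]
    exact this ▸ (hx.const_smul l).sub hu_lim
  obtain ⟨hxD, hgx⟩ := hcl.mem_closure_opGraph_iff.1 <|
    mem_closure_of_tendsto (hx.prodMk_nhds hgv) (.of_forall fun n => ⟨hvD n, rfl⟩)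
  exact ⟨x, hxD, by rw [← hgx]; abel⟩

end Dissipative

section Resolvent

variable {D : Set E} {A : E → E} {l : ℝ}

theorem IsDissipative.exists_resolvent (h : IsDissipative D A) (hlin : IsLinearOp D A)
    (hl : 0 < l) (hsurj : ∀ z, ∃ x ∈ D, l • x - A x = z) :
    ∃ R : E →L[ℝ] E, ‖R‖ ≤ l⁻¹ ∧ ∀ z, R z ∈ D ∧ l • R z - A (R z) = z := by
  choose r hrD hr using hsurj
  have hr_left : ∀ {x}, x ∈ D → r (l • x - A x) = x := fun hx =>
    h.eq_of_smul_sub_eq hlin (hrD _) hx hl (hr _)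
  let R : E →ₗ[ℝ] E :=
    { toFun := r
      map_add' := fun z w => by
        obtain ⟨hD, hA⟩ := hlin.2.1 _ (hrD z) _ (hrD w)
        have : l • (r z + r w) - A (r z + r w) = z + w := by
          rw [hA]; linear_combination (norm := module) hr z + hr w
        rw [← hr_left hD, this]
      map_smul' := fun c z => by
        obtain ⟨hD, hA⟩ := hlin.2.2 c _ (hrD z)
        have : l • (c • r z) - A (c • r z) = c • z := by
          rw [hA]; linear_combination (norm := module) c • hr z
        rw [RingHom.id_apply, ← hr_left hD, this] }
  have hbound : ∀ z, ‖R z‖ ≤ l⁻¹ * ‖z‖ := fun z => by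
    have := h _ (hrD z) l hl
    rw [hr z] at this
    exact (le_inv_mul_iff₀ hl).2 this
  exact ⟨R.mkContinuous l⁻¹ hbound, LinearMap.mkContinuous_norm_le _ (inv_nonneg.2 hl.le) _,
    fun z => ⟨hrD z, hr z⟩⟩

variable [CompleteSpace E]

theorem IsDissipative.surjective_of_abs_sub_lt (h : IsDissipative D A) (hlin : IsLinearOp D A)
    (hl : 0 < l) (hsurj : ∀ z, ∃ x ∈ D, l • x - A x = z) {μ : ℝ} (hμ : |μ - l| < l) (z : E) :
    ∃ x ∈ D, μ • x - A x = z := by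
  obtain ⟨R, hR_norm, hR⟩ := h.exists_resolvent hlin hl hsurj
  have hsmall : ‖-((μ - l) • R)‖ < 1 := by
    rw [norm_neg, norm_smul, Real.norm_eq_abs]
    calc |μ - l| * ‖R‖ ≤ |μ - l| * l⁻¹ := by gcongr
      _ < l * l⁻¹ := by gcongr
      _ = 1 := mul_inv_cancel₀ hl.ne'
  -- `μ - A = (1 + (μ - l) R) (l - A)` on `D`, and the first factor is invertible
  set u := Units.oneSub _ hsmall
  have hu : (u : E →L[ℝ] E) = 1 + (μ - l) • R := by simp [u, Units.oneSub]
  set w := (↑u⁻¹ : E →L[ℝ] E) z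
  refine ⟨R w, (hR w).1, ?_⟩
  calc μ • R w - A (R w) = (l • R w - A (R w)) + (μ - l) • R w := by module
    _ = (u : E →L[ℝ] E) w := by rw [(hR w).2, hu]; simp
    _ = z := by
      change ((u * u⁻¹ : (E →L[ℝ] E)ˣ) : E →L[ℝ] E) z = z
      simp

theorem IsDissipative.surjective_of_pos (h : IsDissipative D A) (hlin : IsLinearOp D A)
    {l₀ : ℝ} (hl₀ : 0 < l₀) (hsurj : ∀ z, ∃ x ∈ D, l₀ • x - A x = z) :
    ∀ l : ℝ, 0 < l → ∀ z, ∃ x ∈ D, l • x - A x = z := by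
  have step : ∀ L : ℝ, 0 < L → (∀ z, ∃ x ∈ D, L • x - A x = z) →
      ∀ μ : ℝ, 0 < μ → μ < 2 * L → ∀ z, ∃ x ∈ D, μ • x - A x = z := fun L hL hs μ hμ hμL =>
    h.surjective_of_abs_sub_lt hlin hL hs (μ := μ) (abs_lt.2 ⟨by linarith, by linarith⟩)
  have hpow : ∀ n : ℕ, ∀ z, ∃ x ∈ D, (l₀ * (3 / 2) ^ n) • x - A x = z := by
    intro n
    induction n with
    | zero => simpa using hsurj
    | succ k ih =>
      refine step _ (by positivity) ih _ (by positivity) ?_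
      rw [pow_succ]
      nlinarith [pow_pos (show (0 : ℝ) < 3 / 2 by norm_num) k]
  intro l hl
  obtain ⟨n, hn⟩ := pow_unbounded_of_one_lt (l / l₀) (show (1 : ℝ) < 3 / 2 by norm_num)
  refine step _ (by positivity) (hpow n) l hl ?_
  rw [div_lt_iff₀ hl₀] at hn
  nlinarith [pow_pos (show (0 : ℝ) < 3 / 2 by norm_num) n]

end Resolvent

section OperatorExponential

open NormedSpace
open scoped Nat

-- the `NormedSpace.exp` API is stated for `ℚ`-normed algebras
instance : NormedAlgebra ℚ (E →L[ℝ] E) := NormedAlgebra.restrictScalars ℚ ℝ (E →L[ℝ] E)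

theorem exp_smul_one (c : ℝ) : exp (c • (1 : E →L[ℝ] E)) = Real.exp c • (1 : E →L[ℝ] E) := by
  rw [← Algebra.algebraMap_eq_smul_one, ← algebraMap_exp_comm, Algebra.algebraMap_eq_smul_one,
    Real.exp_eq_exp_ℝ]

/-- Applied to the resolvent `R = (l - A)⁻¹`, this is the Yosida approximation of `A`. -/
def yosidaApprox (l : ℝ) (R : E →L[ℝ] E) : E →L[ℝ] E := l ^ 2 • R - l • (1 : E →L[ℝ] E)

theorem yosidaApprox_apply (l : ℝ) (R : E →L[ℝ] E) (x : E) :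
    yosidaApprox l R x = l ^ 2 • R x - l • x := by
  simp [yosidaApprox]

theorem Commute.yosidaApprox {R S : E →L[ℝ] E} (h : Commute R S) (l m : ℝ) :
    Commute (yosidaApprox l R) (yosidaApprox m S) :=
  (((h.smul_left _).smul_right _).sub_right ((Commute.one_right _).smul_right _)).sub_left
    ((Commute.one_left _).smul_left _)

variable [CompleteSpace E]

theorem ContinuousLinearMap.norm_exp_le_exp_norm (M : E →L[ℝ] E) : ‖exp M‖ ≤ Real.exp ‖M‖ := by
  have hM : HasSum (fun n : ℕ => (n !⁻¹ : ℝ) • M ^ n) (exp M) := exp_series_hasSum_exp' M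
  have hnorm : HasSum (fun n : ℕ => (n !⁻¹ : ℝ) * ‖M‖ ^ n) (Real.exp ‖M‖) := by
    rw [Real.exp_eq_exp_ℝ]
    simpa [smul_eq_mul] using exp_series_hasSum_exp' (𝕂 := ℝ) ‖M‖
  have hterm : ∀ n : ℕ, ‖(n !⁻¹ : ℝ) • M ^ n‖ ≤ (n !⁻¹ : ℝ) * ‖M‖ ^ n := by
    intro n
    rw [norm_smul, Real.norm_of_nonneg (by positivity)]
    gcongr
    rcases n with _ | k
    · rw [pow_zero, pow_zero]
      exact ContinuousLinearMap.norm_id_le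
    · exact norm_pow_le' M k.succ_pos
  rw [← hM.tsum_eq, ← hnorm.tsum_eq]
  exact (norm_tsum_le_tsum_norm (norm_expSeries_summable' M)).trans
    ((norm_expSeries_summable' M).tsum_le_tsum hterm hnorm.summable)

theorem norm_exp_smul_yosidaApprox_le {l : ℝ} (hl : 0 < l) {R : E →L[ℝ] E} (hR : ‖R‖ ≤ l⁻¹)
    {t : ℝ} (ht : 0 ≤ t) : ‖exp (t • yosidaApprox l R)‖ ≤ 1 := by
  have hsplit : t • yosidaApprox l R = (-(t * l)) • (1 : E →L[ℝ] E) + (t * l ^ 2) • R := by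
    rw [yosidaApprox]; module
  have hcomm : Commute ((-(t * l)) • (1 : E →L[ℝ] E)) ((t * l ^ 2) • R) :=
    ((Commute.one_left _).smul_left _).smul_right _
  have hR' : ‖exp ((t * l ^ 2) • R)‖ ≤ Real.exp (t * l) := by
    refine (ContinuousLinearMap.norm_exp_le_exp_norm _).trans (Real.exp_le_exp.2 ?_)
    rw [norm_smul, Real.norm_of_nonneg (by positivity)]
    calc t * l ^ 2 * ‖R‖ ≤ t * l ^ 2 * l⁻¹ := by gcongr
      _ = t * l := by field_simp
  rw [hsplit, exp_add_of_commute hcomm, exp_smul_one, smul_mul_assoc, one_mul, norm_smul,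
    Real.norm_of_nonneg (Real.exp_pos _).le]
  calc Real.exp (-(t * l)) * ‖exp ((t * l ^ 2) • R)‖ ≤ Real.exp (-(t * l)) * Real.exp (t * l) := by
        gcongr
    _ = 1 := by rw [← Real.exp_add, neg_add_cancel, Real.exp_zero]

theorem hasDerivAt_exp_smul_sub_mul_exp_smul {B C : E →L[ℝ] E} (hBC : Commute B C) (t s : ℝ) :
    HasDerivAt (fun s : ℝ => exp ((t - s) • C) * exp (s • B))
      (exp ((t - s) • C) * exp (s • B) * (B - C)) s := by
  have hC : HasDerivAt (fun s : ℝ => exp ((t - s) • C)) (-(exp ((t - s) • C) * C)) s := by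
    simpa [Function.comp_def] using (hasDerivAt_exp_smul_const (𝕂 := ℝ) C (t - s)).scomp s
      ((hasDerivAt_id s).const_sub t)
  have hCB : C * exp (s • B) = exp (s • B) * C := (hBC.symm.smul_right s).exp_right
  refine (hC.mul (hasDerivAt_exp_smul_const (𝕂 := ℝ) B s)).congr_deriv ?_
  rw [neg_mul, mul_assoc, hCB, mul_sub, ← mul_assoc, ← mul_assoc]
  abel

theorem tendsto_slope_exp_smul_apply (B : E →L[ℝ] E) (x : E) :
    Tendsto (fun t : ℝ => t⁻¹ • (exp (t • B) x - x)) (𝓝[>] 0) (𝓝 (B x)) := by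
  simpa using ((hasDerivAt_exp_smul_const (𝕂 := ℝ) B 0).clm_apply
    (hasDerivAt_const 0 x)).tendsto_slope_zero_right

theorem norm_exp_smul_apply_sub_le {B C : E →L[ℝ] E} (hBC : Commute B C)
    (hB : ∀ s : ℝ, 0 ≤ s → ‖exp (s • B)‖ ≤ 1) (hC : ∀ s : ℝ, 0 ≤ s → ‖exp (s • C)‖ ≤ 1)
    {t : ℝ} (ht : 0 ≤ t) (x : E) :
    ‖exp (t • B) x - exp (t • C) x‖ ≤ t * ‖B x - C x‖ := by
  set f : ℝ → E := fun s => (exp ((t - s) • C) * exp (s • B)) x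
  have hf : ∀ s, HasDerivAt f ((exp ((t - s) • C) * exp (s • B) * (B - C)) x) s := fun s =>
    ((hasDerivAt_exp_smul_sub_mul_exp_smul hBC t s).clm_apply (hasDerivAt_const s x)).congr_deriv
      (by rw [map_zero, add_zero])
  have hf' : ∀ s ∈ Ico 0 t, ‖(exp ((t - s) • C) * exp (s • B) * (B - C)) x‖ ≤ ‖(B - C) x‖ := by
    intro s hs
    calc _ ≤ ‖exp ((t - s) • C) * exp (s • B)‖ * ‖(B - C) x‖ :=
          ContinuousLinearMap.le_opNorm (exp ((t - s) • C) * exp (s • B)) ((B - C) x)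
      _ ≤ ‖exp ((t - s) • C)‖ * ‖exp (s • B)‖ * ‖(B - C) x‖ := by
          gcongr
          exact norm_mul_le _ _
      _ ≤ 1 * 1 * ‖(B - C) x‖ := by
          gcongr
          exacts [hC _ (by linarith [hs.2]), hB _ hs.1]
      _ = ‖(B - C) x‖ := by ring
  have key := norm_image_sub_le_of_norm_deriv_le_segment' (fun s _ => (hf s).hasDerivWithinAt)
    hf' t (right_mem_Icc.2 ht)
  simpa [f, mul_comm] using key

end OperatorExponential

section UniformlyBounded

variable {F : Type*} [NormedAddCommGroup F]

theorem tendsto_apply_of_dense [NormedSpace ℝ F] {ι : Type*} {l : Filter ι}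
    {T : ι → E →L[ℝ] F} {L : E →L[ℝ] F} {C : ℝ} (hT : ∀ i, ‖T i‖ ≤ C) {s : Set E} (hs : Dense s)
    (h : ∀ x ∈ s, Tendsto (fun i => T i x) l (𝓝 (L x))) (x : E) :
    Tendsto (fun i => T i x) l (𝓝 (L x)) := by
  have hT_equi : Equicontinuous ((↑) ∘ T : ι → E → F) :=
    ((NormedSpace.equicontinuous_TFAE T).out 5 1).mp (⟨C, hT⟩ : ∃ C, ∀ i, ‖T i‖ ≤ C)
  exact (hT_equi.isClosed_setOfPred_tendsto L.continuous).closure_subset_iff.2 h (hs x)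

theorem cauchySeq_apply_of_dense [NormedSpace ℝ F] {T : ℕ → E →L[ℝ] F} {C : ℝ}
    (hT : ∀ n, ‖T n‖ ≤ C) {s : Set E} (hs : Dense s) (h : ∀ x ∈ s, CauchySeq fun n => T n x) (x : E) :
    CauchySeq fun n => T n x := by
  simp only [cauchySeq_iff_tendsto_dist_atTop_0, dist_eq_norm,
    ← tendsto_zero_iff_norm_tendsto_zero] at h ⊢
  have hbound : ∀ p : ℕ × ℕ, ‖T p.1 - T p.2‖ ≤ C + C := fun p =>
    (norm_sub_le _ _).trans (add_le_add (hT _) (hT _))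
  simpa using tendsto_apply_of_dense (T := fun p : ℕ × ℕ => T p.1 - T p.2) (L := 0) hbound hs
    (by simpa using h) x

theorem tendsto_apply_apply_of_norm_le [NormedSpace ℝ F] {T : ℕ → E →L[ℝ] F} {L : E →L[ℝ] F}
    {C : ℝ} (hT : ∀ n, ‖T n‖ ≤ C) (hTL : ∀ y, Tendsto (fun n => T n y) atTop (𝓝 (L y)))
    {u : ℕ → E} {x : E} (hu : Tendsto u atTop (𝓝 x)) :
    Tendsto (fun n => T n (u n)) atTop (𝓝 (L x)) := by
  have hsmall : Tendsto (fun n => T n (u n - x)) atTop (𝓝 0) := by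
    refine squeeze_zero_norm (fun n => ((T n).le_opNorm _).trans
      (mul_le_mul_of_nonneg_right (hT n) (norm_nonneg _))) ?_
    simpa using (tendsto_iff_norm_sub_tendsto_zero.1 hu).const_mul C
  simpa using hsmall.add (hTL x)

theorem tendstoUniformlyOn_of_norm_sub_le {α ι : Type*} {l : Filter ι} {G : ι → α → F}
    {g : α → F} {s : Set α} {c : ι → ℝ} (hG : ∀ i, ∀ a ∈ s, ‖G i a - g a‖ ≤ c i)
    (hc : Tendsto c l (𝓝 0)) : TendstoUniformlyOn G g l s := by
  refine Metric.tendstoUniformlyOn_iff.2 fun ε hε => ?_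
  filter_upwards [hc.eventually (gt_mem_nhds hε)] with i hi a ha
  rw [dist_comm, dist_eq_norm]
  exact (hG i a ha).trans_lt hi

end UniformlyBounded

section GeneratorLimit

variable {S : ℝ → E →L[ℝ] E}

theorem GenLimitAt.sub {x x' y y' : E} (h : GenLimitAt S x y) (h' : GenLimitAt S x' y') :
    GenLimitAt S (x - x') (y - y') := by
  refine (Filter.Tendsto.sub h h').congr fun t => ?_
  rw [map_sub, ← smul_sub, sub_sub_sub_comm]

theorem Real.tendsto_slope_exp_mul (c : ℝ) :
    Tendsto (fun t : ℝ => t⁻¹ * (Real.exp (c * t) - 1)) (𝓝[>] 0) (𝓝 c) := by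
  have hd : HasDerivAt (fun t : ℝ => Real.exp (c * t)) c 0 := by
    simpa using ((hasDerivAt_id (0 : ℝ)).const_mul c).exp
  simpa using hd.tendsto_slope_zero_right

/-- Differentiate `φ (S t x) ≤ e^{ct} ‖x‖ = e^{ct} φ x` at `t = 0`. -/
theorem GenLimitAt.le_of_norm_le {c : ℝ} (hS : ∀ t, 0 < t → ‖S t‖ ≤ Real.exp (c * t))
    {x y : E} (h : GenLimitAt S x y) {φ : StrongDual ℝ E} (hφ : ‖φ‖ ≤ 1) (hφx : φ x = ‖x‖) :
    φ y ≤ c * ‖x‖ := by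
  have hφ_lim := ((φ.continuous.tendsto y).comp h)
  refine le_of_tendsto_of_tendsto hφ_lim ((Real.tendsto_slope_exp_mul c).mul_const ‖x‖) ?_
  filter_upwards [self_mem_nhdsWithin] with t (ht : 0 < t)
  have hSx : φ (S t x) ≤ Real.exp (c * t) * ‖x‖ :=
    calc φ (S t x) ≤ ‖φ‖ * ‖S t x‖ := (le_abs_self _).trans (φ.le_opNorm _)
      _ ≤ 1 * (‖S t‖ * ‖x‖) := by gcongr; exact (S t).le_opNorm x
      _ ≤ Real.exp (c * t) * ‖x‖ := by rw [one_mul]; gcongr; exact hS t ht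
  simp only [Function.comp_apply, map_smul, map_sub, hφx, smul_eq_mul]
  rw [mul_assoc]
  gcongr
  linarith

theorem GenLimitAt.eq_zero_of_self (hS : ∀ t, 0 < t → ‖S t‖ ≤ 1) {u : E}
    (h : GenLimitAt S u u) : u = 0 := by
  obtain ⟨φ, hφ, hφu⟩ := exists_dual_vector'' ℝ u
  have := h.le_of_norm_le (c := 0) (by simpa using hS) hφ hφu
  rw [zero_mul, hφu] at this
  exact norm_le_zero_iff.1 this

end GeneratorLimit

/-- The hypotheses of the Hille–Yosida theorem for contraction semigroups. -/
structure IsMDissipative (D : Set E) (A : E → E) : Prop where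
  isLinearOp : IsLinearOp D A
  dense : Dense D
  isDissipative : IsDissipative D A
  surjective : ∀ l : ℝ, 0 < l → ∀ z, ∃ x ∈ D, l • x - A x = z

namespace IsMDissipative

open NormedSpace

variable {D : Set E} {A : E → E} (hA : IsMDissipative D A)

/-- The resolvent `(n + 1 - A)⁻¹`. -/
def resolvent (n : ℕ) : E →L[ℝ] E :=
  (hA.isDissipative.exists_resolvent hA.isLinearOp n.cast_add_one_pos
    (hA.surjective _ n.cast_add_one_pos)).choose

theorem norm_resolvent_le (n : ℕ) : ‖hA.resolvent n‖ ≤ ((n : ℝ) + 1)⁻¹ :=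
  (hA.isDissipative.exists_resolvent hA.isLinearOp n.cast_add_one_pos
    (hA.surjective _ n.cast_add_one_pos)).choose_spec.1

theorem resolvent_spec (n : ℕ) (z : E) :
    hA.resolvent n z ∈ D ∧ ((n : ℝ) + 1) • hA.resolvent n z - A (hA.resolvent n z) = z :=
  (hA.isDissipative.exists_resolvent hA.isLinearOp n.cast_add_one_pos
    (hA.surjective _ n.cast_add_one_pos)).choose_spec.2 z

theorem resolvent_smul_sub (n : ℕ) {x : E} (hx : x ∈ D) :
    hA.resolvent n (((n : ℝ) + 1) • x - A x) = x :=
  hA.isDissipative.eq_of_smul_sub_eq hA.isLinearOp (hA.resolvent_spec n _).1 hx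
    n.cast_add_one_pos (hA.resolvent_spec n _).2

theorem smul_resolvent_sub_self (n : ℕ) {x : E} (hx : x ∈ D) :
    ((n : ℝ) + 1) • hA.resolvent n x - x = hA.resolvent n (A x) := by
  have h := hA.resolvent_smul_sub n hx
  rw [map_sub, map_smul] at h
  linear_combination (norm := module) h

theorem tendsto_smul_resolvent (x : E) :
    Tendsto (fun n : ℕ => ((n : ℝ) + 1) • hA.resolvent n x) atTop (𝓝 x) := by
  have hbound : ∀ n : ℕ, ‖((n : ℝ) + 1) • hA.resolvent n‖ ≤ 1 := fun n => by
    rw [norm_smul, Real.norm_of_nonneg n.cast_add_one_pos.le]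
    exact (mul_le_mul_of_nonneg_left (hA.norm_resolvent_le n) n.cast_add_one_pos.le).trans
      (mul_inv_cancel₀ n.cast_add_one_pos.ne').le
  refine tendsto_apply_of_dense (L := ContinuousLinearMap.id ℝ E) hbound hA.dense (fun y hy => ?_) x
  rw [tendsto_iff_norm_sub_tendsto_zero]
  refine squeeze_zero (fun _ => norm_nonneg _) (fun n => ?_)
    (by simpa using tendsto_one_div_add_atTop_nhds_zero_nat.mul_const ‖A y‖)
  calc ‖((n : ℝ) + 1) • hA.resolvent n y - y‖ = ‖hA.resolvent n (A y)‖ := by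
        rw [← hA.smul_resolvent_sub_self n hy]
    _ ≤ ((n : ℝ) + 1)⁻¹ * ‖A y‖ :=
        ((hA.resolvent n).le_opNorm _).trans (by gcongr; exact hA.norm_resolvent_le n)

theorem resolvent_sub_resolvent (n m : ℕ) (z : E) :
    hA.resolvent n z - hA.resolvent m z =
      (((m : ℝ) + 1) - ((n : ℝ) + 1)) • hA.resolvent n (hA.resolvent m z) := by
  obtain ⟨hn_mem, hn⟩ := hA.resolvent_spec n z
  obtain ⟨hm_mem, hm⟩ := hA.resolvent_spec m z
  obtain ⟨hsub_mem, hA_sub⟩ := hA.isLinearOp.sub hn_mem hm_mem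
  have hkey : ((n : ℝ) + 1) • (hA.resolvent n z - hA.resolvent m z)
      - A (hA.resolvent n z - hA.resolvent m z) =
      (((m : ℝ) + 1) - ((n : ℝ) + 1)) • hA.resolvent m z := by
    rw [hA_sub]
    linear_combination (norm := module) hn - hm
  rw [← hA.resolvent_smul_sub n hsub_mem, hkey, map_smul]

theorem commute_resolvent (n m : ℕ) : Commute (hA.resolvent n) (hA.resolvent m) := by
  rcases eq_or_ne n m with rfl | hnm
  · exact Commute.refl _
  refine ContinuousLinearMap.ext fun z => smul_right_injective E
    (sub_ne_zero.2 (by exact_mod_cast (by omega : m + 1 ≠ n + 1) : ((m : ℝ) + 1) ≠ (n : ℝ) + 1)) ?_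
  have h₁ := hA.resolvent_sub_resolvent n m z
  have h₂ := hA.resolvent_sub_resolvent m n z
  change (((m : ℝ) + 1) - ((n : ℝ) + 1)) • hA.resolvent n (hA.resolvent m z) =
    (((m : ℝ) + 1) - ((n : ℝ) + 1)) • hA.resolvent m (hA.resolvent n z)
  linear_combination (norm := module) -h₁ - h₂

def yosida (n : ℕ) : E →L[ℝ] E := yosidaApprox ((n : ℝ) + 1) (hA.resolvent n)

theorem yosida_apply_of_mem (n : ℕ) {x : E} (hx : x ∈ D) :
    hA.yosida n x = ((n : ℝ) + 1) • hA.resolvent n (A x) := by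
  rw [← hA.smul_resolvent_sub_self n hx, yosida, yosidaApprox_apply]
  module

theorem tendsto_yosida {x : E} (hx : x ∈ D) :
    Tendsto (fun n => hA.yosida n x) atTop (𝓝 (A x)) := by
  simpa only [hA.yosida_apply_of_mem _ hx] using hA.tendsto_smul_resolvent (A x)

theorem commute_yosida (n m : ℕ) : Commute (hA.yosida n) (hA.yosida m) :=
  (hA.commute_resolvent n m).yosidaApprox _ _

variable [CompleteSpace E]

theorem norm_exp_smul_yosida_le (n : ℕ) {t : ℝ} (ht : 0 ≤ t) : ‖exp (t • hA.yosida n)‖ ≤ 1 :=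
  norm_exp_smul_yosidaApprox_le n.cast_add_one_pos (hA.norm_resolvent_le n) ht

/-- Frozen at `1` for `t < 0`, so that the limit exists and is a contraction for every `t`. -/
def yosidaSemigroup (n : ℕ) (t : ℝ) : E →L[ℝ] E := exp (max t 0 • hA.yosida n)

theorem norm_yosidaSemigroup_le (n : ℕ) (t : ℝ) : ‖hA.yosidaSemigroup n t‖ ≤ 1 :=
  hA.norm_exp_smul_yosida_le n (le_max_right t 0)

theorem continuous_yosidaSemigroup_apply (n : ℕ) (x : E) :
    Continuous fun t => hA.yosidaSemigroup n t x :=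
  (exp_continuous.comp (by fun_prop : Continuous fun t : ℝ => max t 0 • hA.yosida n)).clm_apply
    continuous_const

theorem norm_yosidaSemigroup_apply_sub_le (n m : ℕ) (t : ℝ) (x : E) :
    ‖hA.yosidaSemigroup n t x - hA.yosidaSemigroup m t x‖ ≤
      max t 0 * ‖hA.yosida n x - hA.yosida m x‖ :=
  norm_exp_smul_apply_sub_le (hA.commute_yosida n m) (fun _ => hA.norm_exp_smul_yosida_le n)
    (fun _ => hA.norm_exp_smul_yosida_le m) (le_max_right t 0) x

theorem cauchySeq_yosidaSemigroup_apply (t : ℝ) (x : E) :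
    CauchySeq fun n => hA.yosidaSemigroup n t x := by
  refine cauchySeq_apply_of_dense (hA.norm_yosidaSemigroup_le · t) hA.dense (fun y hy => ?_) x
  have hB := (hA.tendsto_yosida hy).cauchySeq
  rw [cauchySeq_iff_tendsto_dist_atTop_0] at hB ⊢
  refine squeeze_zero (fun _ => dist_nonneg) (fun p => ?_) (by simpa using hB.const_mul (max t 0))
  rw [dist_eq_norm, dist_eq_norm]
  exact hA.norm_yosidaSemigroup_apply_sub_le _ _ t y

def semigroup (t : ℝ) : E →L[ℝ] E :=
  continuousLinearMapOfTendsto (fun n => hA.yosidaSemigroup n t) <| tendsto_pi_nhds.2 fun x =>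
    tendsto_nhds_limUnder (cauchySeq_tendsto_of_complete (hA.cauchySeq_yosidaSemigroup_apply t x))

theorem tendsto_yosidaSemigroup_apply (t : ℝ) (x : E) :
    Tendsto (fun n => hA.yosidaSemigroup n t x) atTop (𝓝 (hA.semigroup t x)) :=
  tendsto_nhds_limUnder (cauchySeq_tendsto_of_complete (hA.cauchySeq_yosidaSemigroup_apply t x))

theorem norm_semigroup_le (t : ℝ) : ‖hA.semigroup t‖ ≤ 1 :=
  ContinuousLinearMap.opNorm_le_bound _ zero_le_one fun x =>
    le_of_tendsto (hA.tendsto_yosidaSemigroup_apply t x).norm <| .of_forall fun n =>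
      ((hA.yosidaSemigroup n t).le_opNorm x).trans
        (mul_le_mul_of_nonneg_right (hA.norm_yosidaSemigroup_le n t) (norm_nonneg x))

theorem semigroup_zero : hA.semigroup 0 = 1 := by
  ext x
  refine tendsto_nhds_unique (hA.tendsto_yosidaSemigroup_apply 0 x) ?_
  simp [yosidaSemigroup]

theorem semigroup_add {t s : ℝ} (ht : 0 ≤ t) (hs : 0 ≤ s) :
    hA.semigroup (t + s) = (hA.semigroup t).comp (hA.semigroup s) := by
  ext x
  have hsplit : ∀ n, hA.yosidaSemigroup n (t + s) x =
      hA.yosidaSemigroup n t (hA.yosidaSemigroup n s x) := fun n => by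
    rw [yosidaSemigroup, max_eq_left (add_nonneg ht hs), add_smul,
      exp_add_of_commute (((Commute.refl _).smul_left _).smul_right _)]
    simp [yosidaSemigroup, max_eq_left ht, max_eq_left hs]
  refine tendsto_nhds_unique (hA.tendsto_yosidaSemigroup_apply (t + s) x) ?_
  simpa only [hsplit, ContinuousLinearMap.comp_apply] using
    tendsto_apply_apply_of_norm_le (hA.norm_yosidaSemigroup_le · t)
      (hA.tendsto_yosidaSemigroup_apply t) (hA.tendsto_yosidaSemigroup_apply s x)

theorem norm_yosidaSemigroup_apply_sub_semigroup_le {x : E} (hx : x ∈ D) (n : ℕ) (t : ℝ) :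
    ‖hA.yosidaSemigroup n t x - hA.semigroup t x‖ ≤ max t 0 * ‖hA.yosida n x - A x‖ :=
  le_of_tendsto_of_tendsto (((hA.tendsto_yosidaSemigroup_apply t x).const_sub _).norm)
    ((((hA.tendsto_yosida hx).const_sub _).norm).const_mul _)
    (.of_forall fun m => hA.norm_yosidaSemigroup_apply_sub_le n m t x)

theorem continuous_semigroup_apply_of_mem {x : E} (hx : x ∈ D) :
    Continuous fun t => hA.semigroup t x := by
  refine continuous_iff_continuousAt.2 fun t₀ => ?_
  have hunif : TendstoUniformlyOn (fun n t => hA.yosidaSemigroup n t x)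
      (fun t => hA.semigroup t x) atTop (Iio (t₀ + 1)) := by
    refine tendstoUniformlyOn_of_norm_sub_le
      (c := fun n => max (t₀ + 1) 0 * ‖hA.yosida n x - A x‖) (fun n t ht => ?_)
      (by simpa using (((hA.tendsto_yosida hx).sub_const (A x)).norm).const_mul (max (t₀ + 1) 0))
    refine (hA.norm_yosidaSemigroup_apply_sub_semigroup_le hx n t).trans ?_
    gcongr
    exact le_of_lt ht
  exact (hunif.continuousOn (.of_forall fun n =>
    (hA.continuous_yosidaSemigroup_apply n x).continuousOn)).continuousAt
    (Iio_mem_nhds (lt_add_one t₀))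

theorem continuous_semigroup_apply (x : E) : Continuous fun t => hA.semigroup t x := by
  obtain ⟨u, huD, hu⟩ := mem_closure_iff_seq_limit.mp (hA.dense x)
  have hunif : TendstoUniformly (fun n t => hA.semigroup t (u n)) (fun t => hA.semigroup t x)
      atTop := by
    refine tendstoUniformlyOn_univ.1 (tendstoUniformlyOn_of_norm_sub_le (fun n t _ => ?_)
      (tendsto_iff_norm_sub_tendsto_zero.1 hu))
    rw [← map_sub]
    exact ((hA.semigroup t).le_opNorm _).trans
      (mul_le_of_le_one_left (norm_nonneg _) (hA.norm_semigroup_le t))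
  exact hunif.continuous (.of_forall fun n => hA.continuous_semigroup_apply_of_mem (huD n))

theorem isC0Semigroup : IsC0Semigroup hA.semigroup :=
  ⟨hA.semigroup_zero, fun _ _ => hA.semigroup_add, fun x =>
    (hA.continuous_semigroup_apply x).continuousOn⟩

theorem genLimitAt_semigroup {x : E} (hx : x ∈ D) : GenLimitAt hA.semigroup x (A x) := by
  have hunif : TendstoUniformlyOn (fun n t => t⁻¹ • (hA.yosidaSemigroup n t x - x))
      (fun t => t⁻¹ • (hA.semigroup t x - x)) atTop (Ioi 0) := by
    refine tendstoUniformlyOn_of_norm_sub_le (c := fun n => ‖hA.yosida n x - A x‖)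
      (fun n t (ht : 0 < t) => ?_)
      (by simpa using ((hA.tendsto_yosida hx).sub_const (A x)).norm)
    have hle := hA.norm_yosidaSemigroup_apply_sub_semigroup_le hx n t
    rw [max_eq_left ht.le] at hle
    rw [← smul_sub, sub_sub_sub_cancel_right, norm_smul, Real.norm_of_nonneg (inv_pos.2 ht).le]
    calc t⁻¹ * ‖hA.yosidaSemigroup n t x - hA.semigroup t x‖
        ≤ t⁻¹ * (t * ‖hA.yosida n x - A x‖) := by gcongr
      _ = ‖hA.yosida n x - A x‖ := inv_mul_cancel_left₀ ht.ne' _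
  have hslope : ∀ n, Tendsto (fun t => t⁻¹ • (hA.yosidaSemigroup n t x - x)) (𝓝[>] 0)
      (𝓝 (hA.yosida n x)) := fun n =>
    (tendsto_slope_exp_smul_apply (hA.yosida n) x).congr' <| by
      filter_upwards [self_mem_nhdsWithin] with t (ht : 0 < t)
      rw [yosidaSemigroup, max_eq_left ht.le]
  exact ((tendstoUniformlyOn_iff_tendstoUniformlyOnFilter.1 hunif).mono_right
    (le_principal_iff.2 self_mem_nhdsWithin)).tendsto_of_eventually_tendsto
    (.of_forall hslope) (hA.tendsto_yosida hx)

theorem mem_of_genLimitAt {x y : E} (h : GenLimitAt hA.semigroup x y) : x ∈ D := by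
  obtain ⟨w, hw, hw_eq⟩ := hA.surjective 1 one_pos (x - y)
  have hlim := h.sub (hA.genLimitAt_semigroup hw)
  rw [show y - A w = x - w by linear_combination (norm := module) hw_eq] at hlim
  rwa [sub_eq_zero.1 (hlim.eq_zero_of_self fun t _ => hA.norm_semigroup_le t)]

theorem isGeneratorOf : IsGeneratorOf D A hA.semigroup :=
  ⟨fun _ => ⟨fun hx => ⟨_, hA.genLimitAt_semigroup hx⟩, fun ⟨_, hy⟩ => hA.mem_of_genLimitAt hy⟩,
    fun _ hx => hA.genLimitAt_semigroup hx⟩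

end IsMDissipative

theorem IsDissipative.isMDissipative_closure [CompleteSpace E] {D : Set E} {g : E → E}
    (h : IsDissipative D g) (hlin : IsLinearOp D g) (hdense : Dense D) {l₀ : ℝ} (hl₀ : 0 < l₀)
    (hrange : Dense ((fun x => l₀ • x - g x) '' D)) :
    IsMDissipative (closureDom D g) (closureOp D g) :=
  have hcl := h.isClosableOp hlin hdense
  have hlin' := hcl.isLinearOp_closure hlin
  { isLinearOp := hlin'
    dense := hdense.mono fun x hx => ⟨g x, subset_closure ⟨hx, rfl⟩⟩
    isDissipative := h.closure
    surjective := h.closure.surjective_of_pos hlin' hl₀ (h.surjective_closure hlin hcl hl₀ hrange) }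

section Rescaling

variable {S : ℝ → E →L[ℝ] E}

theorem IsC0Semigroup.exp_mul_smul (hS : IsC0Semigroup S) (c : ℝ) :
    IsC0Semigroup fun t => Real.exp (c * t) • S t where
  map_zero := by simp [hS.map_zero]
  map_add t s ht hs := by
    ext x
    simp only [hS.map_add ht hs, FunLike.coe_smul, Pi.smul_apply,
      ContinuousLinearMap.comp_apply, map_smul, smul_smul, ← Real.exp_add]
    ring_nf
  strong_cont x := by
    exact (by fun_prop : Continuous fun t : ℝ => Real.exp (c * t)).continuousOn.smul
      (hS.strong_cont x)

theorem GenLimitAt.exp_mul_smul {x y : E} (h : GenLimitAt S x y) (c : ℝ) :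
    GenLimitAt (fun t => Real.exp (c * t) • S t) x (y + c • x) := by
  have hexp : Tendsto (fun t : ℝ => Real.exp (c * t)) (𝓝[>] 0) (𝓝 1) := by
    simpa using ((by fun_prop : Continuous fun t : ℝ => Real.exp (c * t)).tendsto 0).mono_left
      nhdsWithin_le_nhds
  refine ((hexp.smul h).add ((Real.tendsto_slope_exp_mul c).smul_const x)).congr' ?_ |>.trans
    (by rw [one_smul])
  exact .of_forall fun t => by simp only [FunLike.coe_smul, Pi.smul_apply]; module

theorem IsGeneratorOf.exp_mul_smul {D : Set E} {A : E → E} (h : IsGeneratorOf D A S) (c : ℝ) :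
    IsGeneratorOf D (fun x => A x + c • x) fun t => Real.exp (c * t) • S t := by
  have hback : ∀ {x y}, GenLimitAt (fun t => Real.exp (c * t) • S t) x y →
      GenLimitAt S x (y + (-c) • x) := fun hxy => by
    convert hxy.exp_mul_smul (-c) using 2 with t
    rw [smul_smul, ← Real.exp_add, neg_mul, neg_add_cancel, Real.exp_zero, one_smul]
  refine ⟨fun x => (h.1 x).trans ⟨fun ⟨y, hy⟩ => ⟨_, hy.exp_mul_smul c⟩,
    fun ⟨y, hy⟩ => ⟨_, hback hy⟩⟩, fun x hx => (h.2 x hx).exp_mul_smul c⟩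

end Rescaling

section GraphShift

variable {D : Set E} {f : E → E}

theorem mem_closure_opGraph_add_smul {x y : E} (hxy : (x, y) ∈ closure (opGraph D f)) (c : ℝ) :
    (x, y + c • x) ∈ closure (opGraph D fun z => f z + c • z) :=
  map_mem_closure (f := fun p : E × E => (p.1, p.2 + c • p.1)) (by fun_prop) hxy
    fun p ⟨hp, e⟩ => ⟨hp, by simp [e]⟩

theorem mem_closure_opGraph_add_smul_iff (c : ℝ) {x y : E} :
    (x, y + c • x) ∈ closure (opGraph D fun z => f z + c • z) ↔
      (x, y) ∈ closure (opGraph D f) := by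
  refine ⟨fun h => ?_, fun h => mem_closure_opGraph_add_smul h c⟩
  simpa using mem_closure_opGraph_add_smul h (-c)

theorem IsClosableOp.of_add_smul {c : ℝ} (h : IsClosableOp D fun z => f z + c • z) :
    IsClosableOp D f := fun x _ _ h₁ h₂ =>
  add_right_cancel <|
    h x _ _ (mem_closure_opGraph_add_smul h₁ c) (mem_closure_opGraph_add_smul h₂ c)

theorem IsClosureOf.of_add_smul {D' : Set E} {A' : E → E} {c : ℝ}
    (h : IsClosureOf D' A' D fun z => f z + c • z) :
    IsClosureOf D' (fun x => A' x + (-c) • x) D f := by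
  have hmem : ∀ {x}, x ∈ D' → (x, A' x + (-c) • x) ∈ closure (opGraph D f) := fun hx =>
    (mem_closure_opGraph_add_smul_iff c).1 (by simpa using h.2 _ hx)
  exact ⟨fun x => ⟨fun hx => ⟨_, hmem hx⟩,
    fun ⟨y, hy⟩ => (h.1 x).2 ⟨_, mem_closure_opGraph_add_smul hy c⟩⟩, fun _ => hmem⟩

end GraphShift

/-- The Lumer–Phillips theorem, shifted by `ω`. -/
theorem exists_semigroup_of_isDissipative_add_smul [CompleteSpace E] {D : Set E} {f : E → E}
    {ω : ℝ} (hlin : IsLinearOp D fun x => f x + ω • x) (hdense : Dense D)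
    (hdiss : IsDissipative D fun x => f x + ω • x) {l₀ : ℝ} (hl₀ : 0 < l₀)
    (hrange : Dense ((fun x => l₀ • x - (f x + ω • x)) '' D)) :
    IsClosableOp D f ∧ ∃ (D' : Set E) (A' : E → E) (S : ℝ → E →L[ℝ] E),
      IsClosureOf D' A' D f ∧ IsC0Semigroup S ∧ IsGeneratorOf D' A' S ∧
        ∀ t ≥ (0 : ℝ), ‖S t‖ ≤ Real.exp (-ω * t) := by
  have hA := hdiss.isMDissipative_closure hlin hdense hl₀ hrange
  refine ⟨(hdiss.isClosableOp hlin hdense).of_add_smul, _, _, _, isClosureOf_closure.of_add_smul,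
    hA.isC0Semigroup.exp_mul_smul (-ω), hA.isGeneratorOf.exp_mul_smul (-ω), fun t _ => ?_⟩
  rw [norm_smul, Real.norm_of_nonneg (Real.exp_pos _).le]
  exact mul_le_of_le_one_right (Real.exp_pos _).le (hA.norm_semigroup_le t)

section AveragedOperator

variable {T ω : ℝ} {A : HypData E V}

theorem Hyp1'.norm_sg_le (h : Hyp1' T A ω) {τ : ℝ} (hτ : τ ∈ Icc 0 T) {s : ℝ} (hs : 0 ≤ s) :
    ‖A.sg τ s‖ ≤ Real.exp (-ω * s) := by
  simpa using h.2 1 (fun _ => τ) (fun _ => s) monotone_const (fun _ => hτ) (fun _ => hs)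

theorem apply_timeAvg_le [CompleteSpace E] (hT : 0 < T) (hcont : ContinuousOn A.bdd (Icc 0 T))
    (φ : StrongDual ℝ E) (v : V) {c : ℝ} (hc : ∀ τ ∈ Icc 0 T, φ (A.bdd τ v) ≤ c) :
    φ (timeAvg T A v) ≤ c := by
  rw [← uIcc_of_le hT.le] at hcont
  have hcont_v : ContinuousOn (fun τ => A.bdd τ v) (uIcc 0 T) :=
    (ContinuousLinearMap.apply ℝ E v).continuous.comp_continuousOn hcont
  have heq : φ (timeAvg T A v) = T⁻¹ * ∫ τ in (0 : ℝ)..T, φ (A.bdd τ v) := by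
    rw [timeAvg, FunLike.coe_smul, Pi.smul_apply, map_smul, smul_eq_mul, one_div,
      ContinuousLinearMap.intervalIntegral_apply hcont.intervalIntegrable v,
      φ.intervalIntegral_comp_comm hcont_v.intervalIntegrable]
  rw [heq, inv_mul_le_iff₀ hT]
  calc ∫ τ in (0 : ℝ)..T, φ (A.bdd τ v) ≤ ∫ _ in (0 : ℝ)..T, c :=
        intervalIntegral.integral_mono_on hT.le
          (φ.continuous.comp_continuousOn hcont_v).intervalIntegrable intervalIntegrable_const hc
    _ = T * c := by simp

theorem isDissipative_timeAvg_add_smul [CompleteSpace E] (hT : 0 < T) (hgen : HypGen T A)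
    (h1 : Hyp1' T A ω) (h3 : Hyp3 ι T A) {f : E → E} (hf : ∀ v, f (ι v) = timeAvg T A v) :
    IsDissipative (range ι) fun x => f x + ω • x := by
  refine IsDissipative.of_dual ?_
  rintro _ ⟨v, rfl⟩ φ hφ hφv
  have hbdd : ∀ τ ∈ Icc 0 T, φ (A.bdd τ v) ≤ -ω * ‖ι v‖ := fun τ hτ => by
    have hlim := (hgen τ hτ).2.2 (ι v) (h3.1 τ hτ v).1
    rw [(h3.1 τ hτ v).2] at hlim
    exact hlim.le_of_norm_le (fun t ht => h1.norm_sg_le hτ ht.le) hφ hφv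
  rw [map_add, map_smul, hφv, hf, smul_eq_mul]
  linarith [apply_timeAvg_le hT h3.2 φ v hbdd]

end AveragedOperator

theorem isLinearOp_range_add_smul {f : E → E} {L : V →L[ℝ] E} (hf : ∀ v, f (ι v) = L v)
    (c : ℝ) : IsLinearOp (range ι) fun x => f x + c • x := by
  refine ⟨⟨0, map_zero ι⟩, ?_, ?_⟩
  · rintro _ ⟨u, rfl⟩ _ ⟨v, rfl⟩
    refine ⟨⟨u + v, map_add ι u v⟩, ?_⟩
    show f (ι u + ι v) + c • (ι u + ι v) = f (ι u) + c • ι u + (f (ι v) + c • ι v)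
    rw [← map_add, hf, hf, hf, map_add, map_add, smul_add]
    abel
  · rintro a _ ⟨v, rfl⟩
    refine ⟨⟨a • v, map_smul ι a v⟩, ?_⟩
    show f (a • ι v) + c • a • ι v = a • (f (ι v) + c • ι v)
    rw [← map_smul, hf, hf, map_smul, map_smul, smul_add, smul_comm c a]

theorem statement_13_general
    {E : Type*} [NormedAddCommGroup E] [NormedSpace ℝ E] [CompleteSpace E]
    {V : Type*} [NormedAddCommGroup V] [NormedSpace ℝ V]
    (ι : V →L[ℝ] E) (hιdense : DenseRange ι)
    (T : ℝ) (hT : 0 < T)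
    (A : HypData E V) (ω : ℝ)
    (hgen : HypGen T A)
    (h1 : Hyp1' T A ω)
    (h3 : Hyp3 ι T A)
    (h4 : Hyp4 ι T A ω)
    -- `f` represents `A₀` as an operator in `E` with domain `ι(V)`
    (f : E → E) (hf : ∀ v : V, f (ι v) = timeAvg T A v) :
    IsClosableOp (Set.range ι) f ∧
      ∃ (D' : Set E) (A' : E → E) (S : ℝ → E →L[ℝ] E),
        IsClosureOf D' A' (Set.range ι) f ∧ IsC0Semigroup S ∧
        IsGeneratorOf D' A' S ∧
        ∀ t ≥ (0 : ℝ), ‖S t‖ ≤ Real.exp (-ω * t) := by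
  obtain ⟨μ₀, hμ₀, hdense⟩ := h4
  have hrange : Dense ((fun x => (μ₀ + ω) • x - (f x + ω • x)) '' range ι) := by
    rw [← range_comp]
    convert hdense using 3 with v
    simp only [Function.comp_apply, hf]
    module
  exact exists_semigroup_of_isDissipative_add_smul (isLinearOp_range_add_smul ι hf ω) hιdense
    (isDissipative_timeAvg_add_smul ι hT hgen h1 h3 hf) (by linarith) hrange

/-- Remark 2(b): under (Hyp'1), (Hyp3) and (Hyp4), the averaged operator
`A₀ = (1/T)∫₀ᵀ A(τ)dτ`, viewed as an operator in `E` with domain `V`, is closable and its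
closure `Â` generates a C₀ semigroup with `‖S_Â(t)‖ ≤ e^{−ωt}`. -/
theorem statement_13
    {E : Type*} [NormedAddCommGroup E] [NormedSpace ℝ E] [CompleteSpace E]
    {V : Type*} [NormedAddCommGroup V] [NormedSpace ℝ V] [CompleteSpace V]
    (ι : V →L[ℝ] E) (hιinj : Function.Injective ι) (hιdense : DenseRange ι)
    (T : ℝ) (hT : 0 < T)
    (A : HypData E V) (ω : ℝ)
    (hgen : HypGen T A)
    (h1 : Hyp1' T A ω)
    (h3 : Hyp3 ι T A)
    (h4 : Hyp4 ι T A ω)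
    -- `f` represents `A₀` as an operator in `E` with domain `ι(V)`
    (f : E → E) (hf : ∀ v : V, f (ι v) = timeAvg T A v) :
    IsClosableOp (Set.range ι) f ∧
      ∃ (D' : Set E) (A' : E → E) (S : ℝ → E →L[ℝ] E),
        IsClosureOf D' A' (Set.range ι) f ∧ IsC0Semigroup S ∧
        IsGeneratorOf D' A' S ∧
        ∀ t ≥ (0 : ℝ), ‖S t‖ ≤ Real.exp (-ω * t) :=
  statement_13_general ι hιdense T hT A ω hgen h1 h3 h4 f hf
end
end

section
/- Let E be a Banach space and (T_n) a sequence of bounded linear operators on E such that for every x∈E the sequence (T_n x) is Cauchy. Then for every bounded set {x_n : n≥1} ⊂ E, β({T_n x_n : n≥1}) ≤ (limsup_{n→∞} ‖T_n‖) · β({x_n : n≥1}). -/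
/-!
By Banach–Steinhaus the norms `‖Tₙ‖` are bounded, so `L = limsup ‖Tₙ‖` is finite and eventually
`‖Tₙ‖ < L + δ`. Cover `{xₙ}` by finitely many balls `B(y, β + δ)`. For each of the finitely many
centres `y` the sequence `Tₙ y` is Cauchy, so from some index `N_y` on it stays within `δ` of
`T_{N_y} y`; hence for large `n`, `Tₙ xₙ` lies within `(L + δ)(β + δ) + δ` of one of these points.
The finitely many remaining terms do not affect `β`, and letting `δ → 0` gives the bound.
-/

open Filter Topology Set

noncomputable section

variable {E : Type*} [NormedAddCommGroup E] [NormedSpace ℝ E]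

section

variable {V : Type*} [NormedAddCommGroup V]

lemma hausdorffMNC_le_of_subset_biUnion_ball {Q : Set V} {r : ℝ} (hr : 0 < r) (c : Finset V)
    (h : Q ⊆ ⋃ y ∈ c, Metric.ball y r) : hausdorffMNC Q ≤ r :=
  csInf_le ⟨0, fun _ hs => hs.1.le⟩ ⟨hr, c, h⟩

lemma exists_subset_biUnion_ball_hausdorffMNC_add {Q : Set V} (hQ : Bornology.IsBounded Q)
    {δ : ℝ} (hδ : 0 < δ) : ∃ c : Finset V, Q ⊆ ⋃ y ∈ c, Metric.ball y (hausdorffMNC Q + δ) := by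
  obtain ⟨R, hR0, hR⟩ := hQ.subset_ball_lt 0 0
  have hne : {r : ℝ | 0 < r ∧ ∃ c : Finset V, Q ⊆ ⋃ y ∈ c, Metric.ball y r}.Nonempty :=
    ⟨R, hR0, {0}, by simpa using hR⟩
  obtain ⟨r, ⟨-, c, hc⟩, hr⟩ :=
    (csInf_lt_iff ⟨0, fun _ hs => hs.1.le⟩ hne).1 (lt_add_of_pos_right (hausdorffMNC Q) hδ)
  exact ⟨c, hc.trans <| iUnion₂_mono fun y _ => Metric.ball_subset_ball hr.le⟩

lemma hausdorffMNC_range_le_of_eventually {u : ℕ → V} {r : ℝ} (c : Finset V)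
    (h : ∀ᶠ n in atTop, ∃ y ∈ c, dist (u n) y < r) : hausdorffMNC (range u) ≤ r := by
  classical
  obtain ⟨N, hN⟩ := eventually_atTop.1 h
  obtain ⟨y, -, hy⟩ := hN N le_rfl
  have hr : 0 < r := dist_nonneg.trans_lt hy
  refine hausdorffMNC_le_of_subset_biUnion_ball hr ((Finset.range N).image u ∪ c) ?_
  rintro _ ⟨n, rfl⟩
  simp only [mem_iUnion, Metric.mem_ball, Finset.mem_union, Finset.mem_image, Finset.mem_range,
    exists_prop]
  rcases lt_or_ge n N with hn | hn
  · exact ⟨u n, Or.inl ⟨n, hn, rfl⟩, by rwa [dist_self]⟩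
  · obtain ⟨y, hy, hdist⟩ := hN n hn
    exact ⟨y, Or.inr hy, hdist⟩

end

lemma ContinuousLinearMap.isBoundedUnder_norm_of_cauchySeq_apply {𝕜 E F : Type*}
    [NontriviallyNormedField 𝕜] [NormedAddCommGroup E] [NormedSpace 𝕜 E] [CompleteSpace E]
    [NormedAddCommGroup F] [NormedSpace 𝕜 F] {T : ℕ → E →L[𝕜] F}
    (hT : ∀ x, CauchySeq fun n => T n x) : IsBoundedUnder (· ≤ ·) atTop fun n => ‖T n‖ :=
  isBoundedUnder_of <| banach_steinhaus fun x => by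
    obtain ⟨C, hC⟩ := isBounded_iff_forall_norm_le.1 (hT x).isBounded_range
    exact ⟨C, fun n => hC _ (mem_range_self n)⟩

lemma hausdorffMNC_range_apply_le {𝕜 E F : Type*} [NontriviallyNormedField 𝕜]
    [NormedAddCommGroup E] [NormedSpace 𝕜 E] [NormedAddCommGroup F] [NormedSpace 𝕜 F]
    {T : ℕ → E →L[𝕜] F} (x : ℕ → E)
    (hT : ∀ y, CauchySeq fun n => T n y) {M r δ : ℝ} (hM : ∀ᶠ n in atTop, ‖T n‖ ≤ M)
    (c : Finset E) (hc : range x ⊆ ⋃ y ∈ c, Metric.ball y r) (hδ : 0 < δ) :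
    hausdorffMNC (range fun n => T n (x n)) ≤ M * r + δ := by
  classical
  choose N hN using fun y => Metric.cauchySeq_iff'.1 (hT y) δ hδ
  have hclose : ∀ᶠ n in atTop, ∀ y ∈ c, dist (T n y) (T (N y) y) < δ :=
    (c.eventually_all).2 fun y _ => eventually_atTop.2 ⟨N y, hN y⟩
  refine hausdorffMNC_range_le_of_eventually (c.image fun y => T (N y) y) ?_
  filter_upwards [hM, hclose] with n hTn hn
  obtain ⟨y, hy, hxy⟩ := mem_iUnion₂.1 (hc (mem_range_self n))
  refine ⟨T (N y) y, Finset.mem_image_of_mem _ hy, ?_⟩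
  calc dist (T n (x n)) (T (N y) y) ≤ dist (T n (x n)) (T n y) + dist (T n y) (T (N y) y) :=
        dist_triangle _ _ _
    _ < M * r + δ := by
        refine add_lt_add_of_le_of_lt ?_ (hn y hy)
        calc dist (T n (x n)) (T n y) ≤ ‖T n‖ * dist (x n) y := (T n).dist_le_opNorm _ _
          _ ≤ M * r := mul_le_mul hTn (Metric.mem_ball.1 hxy).le dist_nonneg
              ((norm_nonneg _).trans hTn)

/-- Lemma 7: if `(Tₙ)` are bounded linear operators such that `(Tₙ x)` is
Cauchy for every `x`, then for every bounded sequence `(xₙ)`,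
`β({Tₙ xₙ : n ≥ 1}) ≤ (limsup ‖Tₙ‖) · β({xₙ : n ≥ 1})`. -/
theorem statement_16
    {E : Type*} [NormedAddCommGroup E] [NormedSpace ℝ E] [CompleteSpace E]
    (T : ℕ → E →L[ℝ] E)
    (hT : ∀ x : E, CauchySeq fun n => T n x)
    (x : ℕ → E) (hx : Bornology.IsBounded (Set.range x)) :
    hausdorffMNC (Set.range fun n => T n (x n)) ≤
      (Filter.limsup (fun n => ‖T n‖) atTop) * hausdorffMNC (Set.range x) := by
  set L := limsup (fun n => ‖T n‖) atTop
  set β := hausdorffMNC (range x)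
  have hbdd := ContinuousLinearMap.isBoundedUnder_norm_of_cauchySeq_apply hT
  have hbound : ∀ δ > 0, hausdorffMNC (range fun n => T n (x n)) ≤ (L + δ) * (β + δ) + δ := by
    intro δ hδ
    obtain ⟨c, hc⟩ := exists_subset_biUnion_ball_hausdorffMNC_add hx hδ
    have hM := (eventually_lt_of_limsup_lt (lt_add_of_pos_right L hδ) hbdd).mono fun _ => le_of_lt
    exact hausdorffMNC_range_apply_le x hT hM c hc hδ
  have hlim : Tendsto (fun δ => (L + δ) * (β + δ) + δ) (𝓝[>] 0) (𝓝 (L * β)) := by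
    refine (Continuous.tendsto' ?_ 0 _ (by simp)).mono_left nhdsWithin_le_nhds
    fun_prop
  exact ge_of_tendsto hlim (eventually_nhdsWithin_of_forall hbound)
end
end
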